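/- arXiv:2202.13439 — 2 statements merged into one kernel-verified Lean document; each statement's English description precedes it below -/
import Mathlib

section
/- Let R be a Polish topological ring and let A be an abelian Polish group equipped with an R-module structure (on the underlying abelian group of A). If the scalar multiplication map R × A → A, (λ, a) ↦ λ·a, is Borel measurable, then it is continuous. -/
/-!
Pettis' argument. A Borel map `f` from a Baire space is continuous on a comeager set `D`. In a
Baire group, given `u n → 0`, the comeager set `D ∩ ⋂ n, (D - u n)` contains a point `z`, so
`f (z + u n) → f z`. For an additive `f` this is `f (u n) → 0`, which makes additive maps
continuous; for a biadditive `B` it gives `B (v n).1 (v n).2 → 0` once the cross terms are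
controlled by separate continuity.
-/

open Filter Topology Set TopologicalSpace

theorem Measurable.exists_mem_residual_continuousOn {X Y : Type*}
    [TopologicalSpace X] [MeasurableSpace X] [BorelSpace X]
    [TopologicalSpace Y] [SecondCountableTopology Y] [MeasurableSpace Y] [OpensMeasurableSpace Y]
    {f : X → Y} (hf : Measurable f) : ∃ D ∈ residual X, ContinuousOn f D := by
  obtain ⟨B, hBc, -, hB⟩ := exists_countable_basis Y
  have hU : ∀ V ∈ B, ∃ U : Set X, IsOpen U ∧ f ⁻¹' V =ᵇ U := fun V hV =>
    (hf (hB.isOpen hV).measurableSet).residualEq_isOpen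
  choose! U hUo hfU using hU
  -- On `D`, the open sets `U V` are exact preimages of the basic open sets `V`.
  refine ⟨⋂ V ∈ B, {x | f x ∈ V ↔ x ∈ U V}, (countable_bInter_mem hBc).2 fun V hV =>
    (hfU V hV).mem_iff, fun x hx => ?_⟩
  refine hB.nhds_hasBasis.tendsto_right_iff.2 fun V ⟨hVB, hxV⟩ => ?_
  have hxU : x ∈ U V := (mem_iInter₂.1 hx V hVB).1 hxV
  filter_upwards [self_mem_nhdsWithin, mem_nhdsWithin_of_mem_nhds ((hUo V hVB).mem_nhds hxU)]
    with y hyD hyU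
  exact (mem_iInter₂.1 hyD V hVB).2 hyU

theorem exists_mem_forall_add_mem {G : Type*} [TopologicalSpace G] [AddGroup G]
    [IsTopologicalAddGroup G] [BaireSpace G] {D : Set G} (hD : D ∈ residual G) (u : ℕ → G) :
    ∃ z ∈ D, ∀ n, z + u n ∈ D := by
  have hshift (n : ℕ) : (· + u n) ⁻¹' D ∈ residual G := by
    rw [← (Homeomorph.addRight (u n)).residual_map_eq] at hD
    exact hD
  obtain ⟨z, hzD, hz⟩ := (dense_of_mem_residual
    (inter_mem hD (countable_iInter_mem.2 hshift))).nonempty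
  exact ⟨z, hzD, mem_iInter.1 hz⟩

theorem Measurable.exists_tendsto_comp_add {G Y : Type*} [TopologicalSpace G] [AddGroup G]
    [IsTopologicalAddGroup G] [BaireSpace G] [MeasurableSpace G] [BorelSpace G]
    [TopologicalSpace Y] [SecondCountableTopology Y] [MeasurableSpace Y] [OpensMeasurableSpace Y]
    {f : G → Y} (hf : Measurable f) {u : ℕ → G} (hu : Tendsto u atTop (𝓝 0)) :
    ∃ z, Tendsto (fun n => f (z + u n)) atTop (𝓝 (f z)) := by
  obtain ⟨D, hD, hfD⟩ := hf.exists_mem_residual_continuousOn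
  obtain ⟨z, hzD, hzuD⟩ := exists_mem_forall_add_mem hD u
  have hzu : Tendsto (fun n => z + u n) atTop (𝓝[D] z) :=
    tendsto_nhdsWithin_iff.2 ⟨by simpa using tendsto_const_nhds.add hu, .of_forall hzuD⟩
  exact ⟨z, (hfD z hzD).tendsto.comp hzu⟩

theorem AddMonoidHom.continuous_of_measurable_of_baireSpace {G H : Type*} [TopologicalSpace G]
    [AddGroup G] [IsTopologicalAddGroup G] [BaireSpace G] [FrechetUrysohnSpace G]
    [MeasurableSpace G] [BorelSpace G] [TopologicalSpace H] [AddGroup H] [IsTopologicalAddGroup H]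
    [SecondCountableTopology H] [MeasurableSpace H] [OpensMeasurableSpace H]
    (f : G →+ H) (hf : Measurable f) : Continuous f := by
  refine continuous_of_continuousAt_zero f ?_
  rw [ContinuousAt, map_zero, tendsto_nhds_iff_seq_tendsto]
  intro u hu
  obtain ⟨z, hz⟩ := hf.exists_tendsto_comp_add hu
  simpa [Function.comp_def] using hz.const_add (-f z)

theorem AddMonoidHom.continuous₂_of_measurable {M N P : Type*}
    [AddCommGroup M] [TopologicalSpace M] [IsTopologicalAddGroup M] [PolishSpace M]
    [MeasurableSpace M] [BorelSpace M]
    [AddCommGroup N] [TopologicalSpace N] [IsTopologicalAddGroup N] [PolishSpace N]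
    [MeasurableSpace N] [BorelSpace N]
    [AddCommGroup P] [TopologicalSpace P] [IsTopologicalAddGroup P] [SecondCountableTopology P]
    [MeasurableSpace P] [OpensMeasurableSpace P]
    (B : M →+ N →+ P) (hB : Measurable fun p : M × N => B p.1 p.2) :
    Continuous fun p : M × N => B p.1 p.2 := by
  have hleft (x : M) : Continuous (B x) :=
    (B x).continuous_of_measurable_of_baireSpace (hB.comp (measurable_const.prodMk measurable_id))
  have hright (y : N) : Continuous (B.flip y) :=
    (B.flip y).continuous_of_measurable_of_baireSpace
      (hB.comp (measurable_id.prodMk measurable_const))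
  refine continuous_of_continuousAt_zero₂ B ?_ (fun x => (hleft x).continuousAt)
    (fun y => (hright y).continuousAt)
  rw [ContinuousAt, tendsto_nhds_iff_seq_tendsto]
  intro v hv
  obtain ⟨z, hz⟩ := hB.exists_tendsto_comp_add hv
  have h1 : Tendsto (fun n => B z.1 (v n).2) atTop (𝓝 0) :=
    ((hleft z.1).tendsto' 0 0 (map_zero _)).comp ((continuous_snd.tendsto _).comp hv)
  have h2 : Tendsto (fun n => B (v n).1 z.2) atTop (𝓝 0) :=
    ((hright z.2).tendsto' 0 0 (map_zero _)).comp ((continuous_fst.tendsto _).comp hv)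
  have := ((hz.sub_const (B z.1 z.2)).sub h1).sub h2
  simpa [Function.comp_def, add_sub_assoc] using this

/-- If `R` is a Polish topological ring and `A` an abelian Polish group with an `R`-module
structure whose scalar multiplication is Borel-measurable, then the scalar multiplication is
continuous. -/
theorem statement17
    {R A : Type*}
    [Ring R] [TopologicalSpace R] [IsTopologicalRing R] [PolishSpace R]
    [MeasurableSpace R] [BorelSpace R]
    [AddCommGroup A] [TopologicalSpace A] [IsTopologicalAddGroup A] [PolishSpace A]
    [MeasurableSpace A] [BorelSpace A]
    [Module R A]
    (hmeas : Measurable fun p : R × A => p.1 • p.2) :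
    Continuous fun p : R × A => p.1 • p.2 :=
  (AddMonoidHom.smul : R →+ A →+ A).continuous₂_of_measurable hmeas
end

section
/- Let K be a separable complete non-Archimedean nontrivially valued field in which 2 ≠ 0, that is, a field with an absolute value |·| : K → [0,∞) satisfying |λμ| = |λ||μ|, |λ+μ| ≤ max(|λ|,|μ|), |λ| = 0 iff λ = 0, admitting some π with 0 < |π| < 1, complete and separable in the induced metric, and with |2| > 0. Let 𝒪 = {λ ∈ K : |λ| ≤ 1} be its valuation ring. Let X be a separable Fréchet space over K (a Polish topological K-vector space with a countable neighborhood basis of 0 consisting of 𝒪-submodules), let Ŷ be a Polish topological K-vector space, and let M ⊆ Ŷ be a K-linear subspace carrying a separable Fréchet space topology whose open sets are Borel in Ŷ. Let g : X → Ŷ be a continuous function such that g(−z) = −g(z) for all z ∈ X and g(λx + μy) − λg(x) − μg(y) ∈ M for all x, y ∈ X and λ, μ ∈ K (so g is a lift of a K-linear map X → Ŷ/M). Let M₁ be an 𝒪-submodule of M that is a neighborhood of 0 in the Fréchet topology of M and satisfies M₁ = cl_Ŷ(M₁) ∩ M, and let X₁ be an 𝒪-submodule of X that is a neighborhood of 0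 in X such that g(x+y) − g(x) − g(y) ∈ M₁ for all x, y ∈ X₁. Then there exists an 𝒪-submodule X₁′ of X which is a neighborhood of 0 in X such that g(λx) − λg(x) ∈ M₁ for every x ∈ X₁′ and every λ ∈ 𝒪. -/
/-- For a non-Archimedean valued field `(K, v)` with valuation ring `𝒪 = {a : v a ≤ 1}`, a subset
`S` of a `K`-vector space is an *`𝒪`-submodule* (absolutely convex set) if it contains `0` and is
closed under addition and under multiplication by scalars of absolute value at most `1`. -/
def IsOSubmodule {K : Type*} [Field K] (v : K → ℝ) {E : Type*} [AddCommGroup E] [Module K E]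
    (S : Set E) : Prop :=
  (0 : E) ∈ S ∧ (∀ x ∈ S, ∀ y ∈ S, x + y ∈ S) ∧
    ∀ a : K, v a ≤ 1 → ∀ x ∈ S, a • x ∈ S

/-!
For fixed `x ∈ X₁` the map `a ↦ g (a • x) - a • g x` is additive modulo `M₁` on `𝒪` and takes
values in `M`, which is covered by countably many Borel translates of a neighbourhood of `0`
inside `M₁`. By Baire's theorem one of the preimages is non-meagre in `K`, and Pettis' theorem
turns this into `g (a • x) - a • g x ∈ M₁` for all small `a`. A second Baire argument, in `X`,
makes "small" uniform near some point `x₀ ∈ X₁`, hence (by additivity modulo `M₁`) near `0`;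
there one only gets membership in `cl_Y(M₁)`, which is why `M₁ = cl_Y(M₁) ∩ M` is needed.
Finally, rescaling a neighbourhood by `π ^ n` turns small scalars into all of `𝒪`.
-/

open Topology Filter Set
open scoped Pointwise

section Defect

variable {K X Y : Type*} [Semiring K] [AddCommGroup X] [Module K X] [AddCommGroup Y] [Module K Y]

def addDefect (g : X → Y) (x y : X) : Y := g (x + y) - g x - g y

def smulDefect (g : X → Y) (a : K) (x : X) : Y := g (a • x) - a • g x

lemma smulDefect_add_left (g : X → Y) (a b : K) (x : X) :
    smulDefect g (a + b) x =
      smulDefect g a x + smulDefect g b x + addDefect g (a • x) (b • x) := by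
  simp only [smulDefect, addDefect, add_smul]
  abel

lemma smulDefect_add_right (g : X → Y) (a : K) (x y : X) :
    smulDefect g a (x + y) =
      smulDefect g a x + smulDefect g a y + addDefect g (a • x) (a • y) - a • addDefect g x y := by
  simp only [smulDefect, addDefect, smul_add, smul_sub]
  abel

lemma smulDefect_smul (g : X → Y) (a b : K) (x : X) :
    smulDefect g a (b • x) = smulDefect g (a * b) x - a • smulDefect g b x := by
  simp only [smulDefect, smul_sub, smul_smul]
  abel

end Defect

lemma isOpen_of_mem_nhds_zero_of_add_mem {G : Type*} [AddGroup G] [TopologicalSpace G]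
    [IsTopologicalAddGroup G] {S : Set G} (h0 : S ∈ 𝓝 (0 : G))
    (hadd : ∀ x ∈ S, ∀ y ∈ S, x + y ∈ S) : IsOpen S := by
  rw [isOpen_iff_mem_nhds]
  intro x hx
  rw [← map_add_left_nhds_zero x, mem_map]
  exact mem_of_superset h0 fun y hy => hadd x hx y hy

section Valuation

variable {K : Type*} [Field K] {v : K → ℝ}

lemma valuation_neg_one_le_one (hvmul : ∀ a b : K, v (a * b) = v a * v b) : v (-1) ≤ 1 := by
  have h₁ := hvmul (-1) (-1)
  have h₂ := hvmul 1 1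
  rw [neg_one_mul, neg_neg] at h₁
  rw [one_mul] at h₂
  have h₃ : v 1 * (v 1 - 1) = 0 := by rw [mul_sub, mul_one, ← h₂, sub_self]
  rcases mul_eq_zero.1 h₃ with h | h <;> nlinarith

lemma valuation_pow (hv0 : ∀ a : K, v a = 0 ↔ a = 0) (hvmul : ∀ a b : K, v (a * b) = v a * v b)
    (a : K) (n : ℕ) : v (a ^ n) = v a ^ n := by
  have hv1 : v 1 = 1 := by
    have h := hvmul 1 1
    rw [one_mul] at h
    have : v 1 ≠ 0 := fun h0 => one_ne_zero ((hv0 1).1 h0)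
    exact (mul_left_cancel₀ this (by rw [mul_one, ← h])).symm
  induction n with
  | zero => simpa using hv1
  | succ n ih => rw [pow_succ, pow_succ, hvmul, ih]

variable [TopologicalSpace K]

lemma isOpen_setOf_valuation_le_one [IsTopologicalAddGroup K]
    (hbasis : ∀ s : Set K, s ∈ 𝓝 (0 : K) ↔ ∃ ε : ℝ, 0 < ε ∧ {a : K | v a < ε} ⊆ s)
    (hvadd : ∀ a b : K, v (a + b) ≤ max (v a) (v b)) : IsOpen {a : K | v a ≤ 1} :=
  isOpen_of_mem_nhds_zero_of_add_mem
    ((hbasis _).2 ⟨1, one_pos, fun a (ha : v a < 1) => (show v a ≤ 1 from ha.le)⟩)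
    fun a ha b hb => (hvadd a b).trans (max_le ha hb)

lemma exists_setOf_valuation_le_pow_subset
    (hbasis : ∀ s : Set K, s ∈ 𝓝 (0 : K) ↔ ∃ ε : ℝ, 0 < ε ∧ {a : K | v a < ε} ⊆ s)
    (hv0 : ∀ a : K, v a = 0 ↔ a = 0)
    (hvmul : ∀ a b : K, v (a * b) = v a * v b) {π : K} (hπ : v π < 1) {s : Set K}
    (hs : s ∈ 𝓝 (0 : K)) : ∃ n : ℕ, {a | v a ≤ v (π ^ n)} ⊆ s := by
  obtain ⟨ε, hε, hεs⟩ := (hbasis s).1 hs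
  obtain ⟨n, hn⟩ := exists_pow_lt_of_lt_one hε hπ
  exact ⟨n, fun a ha => hεs ((ha.trans_eq (valuation_pow hv0 hvmul π n)).trans_lt hn)⟩

end Valuation

namespace IsOSubmodule

variable {K E : Type*} [Field K] {v : K → ℝ} [AddCommGroup E] [Module K E] {S : Set E}

lemma zero_mem (hS : IsOSubmodule v S) : (0 : E) ∈ S := hS.1

lemma add_mem (hS : IsOSubmodule v S) {x y : E} (hx : x ∈ S) (hy : y ∈ S) : x + y ∈ S :=
  hS.2.1 x hx y hy

lemma smul_mem (hS : IsOSubmodule v S) {a : K} (ha : v a ≤ 1) {x : E} (hx : x ∈ S) : a • x ∈ S :=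
  hS.2.2 a ha x hx

lemma neg_mem (hvmul : ∀ a b : K, v (a * b) = v a * v b) (hS : IsOSubmodule v S) {x : E}
    (hx : x ∈ S) : -x ∈ S := by
  simpa using hS.smul_mem (valuation_neg_one_le_one hvmul) hx

lemma sub_mem (hvmul : ∀ a b : K, v (a * b) = v a * v b) (hS : IsOSubmodule v S) {x y : E}
    (hx : x ∈ S) (hy : y ∈ S) : x - y ∈ S := by
  simpa only [sub_eq_add_neg] using hS.add_mem hx (hS.neg_mem hvmul hy)

protected lemma closure [TopologicalSpace E] [ContinuousAdd E] [ContinuousConstSMul K E]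
    (hS : IsOSubmodule v S) : IsOSubmodule v (closure S) :=
  ⟨subset_closure hS.zero_mem,
    fun _ hx _ hy => map_mem_closure₂ continuous_add hx hy fun _ hx _ hy => hS.add_mem hx hy,
    fun _ ha _ hx => map_mem_closure (continuous_const_smul _) hx fun _ hx => hS.smul_mem ha hx⟩

lemma smul_set (hS : IsOSubmodule v S) (c : K) : IsOSubmodule v (c • S) := by
  refine ⟨⟨0, hS.zero_mem, smul_zero c⟩, ?_, ?_⟩
  · rintro _ ⟨x, hx, rfl⟩ _ ⟨y, hy, rfl⟩
    exact ⟨x + y, hS.add_mem hx hy, smul_add c x y⟩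
  · rintro a ha _ ⟨x, hx, rfl⟩
    exact ⟨a • x, hS.smul_mem ha hx, smul_comm c a x⟩

end IsOSubmodule

section Baire

variable {G : Type*} [TopologicalSpace G] [BaireSpace G]

lemma exists_not_isMeagre_of_subset_iUnion {ι : Type*} [Countable ι] {U : Set G}
    (hU : IsOpen U) (hne : U.Nonempty) {s : ι → Set G} (hcover : U ⊆ ⋃ i, s i) :
    ∃ i, ¬ IsMeagre (s i) := by
  by_contra! hall
  exact not_isMeagre_of_isOpen hU hne ((isMeagre_iUnion hall).mono hcover)

lemma exists_inter_interior_nonempty_of_subset_iUnion {ι : Type*} [Countable ι] {U : Set G}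
    (hU : IsOpen U) (hne : U.Nonempty) {F : ι → Set G} (hF : ∀ i, IsClosed (F i))
    (hcover : U ⊆ ⋃ i, F i) : ∃ i, (U ∩ interior (F i)).Nonempty := by
  by_contra! hall
  have hfrontier : U ⊆ ⋃ i, frontier (F i) := by
    intro x hx
    obtain ⟨i, hi⟩ := mem_iUnion.1 (hcover hx)
    refine mem_iUnion.2 ⟨i, subset_closure hi, fun hint => ?_⟩
    exact (hall i).subset ⟨hx, hint⟩
  obtain ⟨i, hi⟩ := exists_not_isMeagre_of_subset_iUnion hU hne hfrontier
  exact hi (isClosed_frontier.isNowhereDense_iff.2 (interior_frontier (hF i))).isMeagre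

lemma nonempty_of_residualEq_of_isOpen {s U : Set G} (h : s =ᵇ U) (hU : IsOpen U)
    (hne : U.Nonempty) : s.Nonempty := by
  obtain ⟨x, hx, hxU⟩ := (dense_of_mem_residual h).exists_mem_open hU hne
  exact ⟨x, hx.mpr hxU⟩

/-- Pettis' theorem. -/
theorem sub_mem_nhds_zero_of_not_isMeagre [AddCommGroup G] [IsTopologicalAddGroup G] {B : Set G}
    (hB : BaireMeasurableSet B) (hnm : ¬ IsMeagre B) : B - B ∈ 𝓝 (0 : G) := by
  obtain ⟨U, hU, hBU⟩ := hB.residualEq_isOpen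
  obtain ⟨u, hu⟩ : U.Nonempty := by
    refine nonempty_iff_ne_empty.2 fun hU₀ => hnm ?_
    rw [IsMeagre]
    filter_upwards [hBU] with x hx hxB
    rw [hU₀] at hx
    exact hx.to_iff.1 hxB
  have hshift : (· + u) ⁻¹' U ∈ 𝓝 (0 : G) :=
    (continuous_add_const u).continuousAt.preimage_mem_nhds (hU.mem_nhds (by simpa using hu))
  filter_upwards [hshift] with t ht
  have hshifted : ((· - t) ⁻¹' B : Set G) =ᵇ (· - t) ⁻¹' U :=
    hBU.comp_tendsto (tendsto_residual_of_isOpenMap (Homeomorph.subRight t).continuous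
      (Homeomorph.subRight t).isOpenMap)
  have hBt : (B ∩ (· - t) ⁻¹' B : Set G) =ᵇ (U ∩ (· - t) ⁻¹' U : Set G) :=
    hBU.inter hshifted
  obtain ⟨z, hzB, hztB⟩ := nonempty_of_residualEq_of_isOpen hBt
    (hU.inter (hU.preimage (continuous_sub_right t))) ⟨t + u, ht, by simpa using hu⟩
  exact ⟨z, hzB, z - t, hztB, sub_sub_cancel z t⟩

end Baire

lemma exists_measurableSet_cover_of_mem_nhds_zero {Z Y : Type*} [tZ : TopologicalSpace Z]
    [AddGroup Z] [IsTopologicalAddGroup Z] [TopologicalSpace.SeparableSpace Z] [AddGroup Y]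
    [MeasurableSpace Y] (ι : Z →+ Y) (hι : ∀ U : Set Z, IsOpen U → MeasurableSet (ι '' U))
    {W : Set Y} (hW : ι ⁻¹' W ∈ 𝓝 (0 : Z)) :
    ∃ C : ℕ → Set Y, (∀ n, MeasurableSet (C n)) ∧ range ι ⊆ ⋃ n, C n ∧
      ∀ n, ∃ c, ∀ y ∈ C n, y - c ∈ W := by
  obtain ⟨u, hu⟩ := TopologicalSpace.exists_dense_seq Z
  set V := interior (ι ⁻¹' W)
  refine ⟨fun n => ι '' ((· - u n) ⁻¹' V),
    fun n => hι _ (isOpen_interior.preimage (continuous_sub_right _)), ?_,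
    fun n => ⟨ι (u n), ?_⟩⟩
  · rintro _ ⟨m, rfl⟩
    obtain ⟨n, hn⟩ := hu.exists_mem_open (isOpen_interior.preimage (continuous_sub_left m))
      ⟨m, by simpa [V] using mem_interior_iff_mem_nhds.2 hW⟩
    exact mem_iUnion.2 ⟨n, m, hn, rfl⟩
  · rintro _ ⟨z, hz, rfl⟩
    rw [← map_sub]
    exact interior_subset (s := ι ⁻¹' W) hz

theorem eventually_mem_of_quasiAdditive {G Y : Type*} [AddCommGroup G] [TopologicalSpace G]
    [IsTopologicalAddGroup G] [BaireSpace G] [AddCommGroup Y] [TopologicalSpace Y]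
    [MeasurableSpace Y] [BorelSpace Y] {S : Set G} (hS : IsOpen S) (hS0 : (0 : G) ∈ S)
    {φ : G → Y} (hφ : Continuous φ) {W : Set Y} (hW : ∀ y ∈ W, ∀ z ∈ W, y - z ∈ W)
    (hadd : ∀ a ∈ S, ∀ b ∈ S, φ (a + b) - φ a - φ b ∈ W)
    {C : ℕ → Set Y} (hC : ∀ n, MeasurableSet (C n)) (hCW : ∀ n, ∃ c, ∀ y ∈ C n, y - c ∈ W)
    (hcover : φ '' S ⊆ ⋃ n, C n) : ∀ᶠ a in 𝓝 (0 : G), φ a ∈ W := by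
  obtain ⟨n, hn⟩ := exists_not_isMeagre_of_subset_iUnion hS ⟨0, hS0⟩
    (s := fun n => S ∩ φ ⁻¹' C n) fun a ha => by
      obtain ⟨n, hn⟩ := mem_iUnion.1 (hcover (mem_image_of_mem φ ha))
      exact mem_iUnion.2 ⟨n, ha, hn⟩
  borelize G
  have hB : BaireMeasurableSet (S ∩ φ ⁻¹' C n) :=
    (hS.measurableSet.inter (hφ.measurable (hC n))).baireMeasurableSet
  obtain ⟨c, hc⟩ := hCW n
  filter_upwards [sub_mem_nhds_zero_of_not_isMeagre hB hn, hS.mem_nhds hS0] with a haB haS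
  obtain ⟨b₁, ⟨-, hb₁⟩, b₂, ⟨hb₂S, hb₂⟩, rfl⟩ := haB
  have hdecomp : φ (b₁ - b₂) =
      (φ b₁ - c) - (φ b₂ - c) - (φ (b₁ - b₂ + b₂) - φ (b₁ - b₂) - φ b₂) := by
    rw [sub_add_cancel]
    abel
  rw [hdecomp]
  exact hW _ (hW _ (hc _ hb₁) _ (hc _ hb₂)) _ (hadd _ haS _ hb₂S)

theorem eventually_smulDefect_mem {K X Y : Type*} [Field K] {v : K → ℝ}
    (hvmul : ∀ a b : K, v (a * b) = v a * v b) [TopologicalSpace K] [IsTopologicalAddGroup K]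
    [BaireSpace K] (hO : IsOpen {a : K | v a ≤ 1}) (hO0 : v 0 ≤ 1)
    [AddCommGroup X] [Module K X] [TopologicalSpace X] [ContinuousSMul K X]
    [AddCommGroup Y] [Module K Y] [TopologicalSpace Y] [ContinuousSub Y] [ContinuousSMul K Y]
    [MeasurableSpace Y] [BorelSpace Y]
    {g : X → Y} (hg : Continuous g) {M₁ : Set Y} (hM₁ : IsOSubmodule v M₁)
    {C : ℕ → Set Y} (hC : ∀ n, MeasurableSet (C n)) (hCM₁ : ∀ n, ∃ c, ∀ y ∈ C n, y - c ∈ M₁)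
    {x : X} (hcover : ∀ a : K, v a ≤ 1 → smulDefect g a x ∈ ⋃ n, C n)
    (hadd : ∀ a b : K, v a ≤ 1 → v b ≤ 1 → addDefect g (a • x) (b • x) ∈ M₁) :
    ∀ᶠ a in 𝓝 (0 : K), smulDefect g a x ∈ M₁ := by
  refine eventually_mem_of_quasiAdditive hO hO0 (φ := fun a => smulDefect g a x) ?_
    (fun y hy z hz => hM₁.sub_mem hvmul hy hz) (fun a ha b hb => ?_) hC hCM₁ ?_
  · exact (hg.comp (continuous_id.smul continuous_const)).sub (continuous_id.smul continuous_const)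
  · convert hadd a b ha hb using 1
    rw [smulDefect_add_left]
    abel
  · rintro _ ⟨a, ha, rfl⟩
    exact hcover a ha

theorem exists_mem_nhds_zero_smulDefect_mem_closure
    {K X Y : Type*} [Field K] {v : K → ℝ} (hvmul : ∀ a b : K, v (a * b) = v a * v b)
    [AddCommGroup X] [Module K X] [TopologicalSpace X] [IsTopologicalAddGroup X]
    [ContinuousConstSMul K X] [BaireSpace X]
    [AddCommGroup Y] [Module K Y] [TopologicalSpace Y] [IsTopologicalAddGroup Y]
    [ContinuousConstSMul K Y]
    {g : X → Y} (hg : Continuous g) {M₁ : Set Y} (hM₁ : IsOSubmodule v M₁)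
    {X₁ : Set X} (hX₁ : IsOSubmodule v X₁) (hX₁nhd : X₁ ∈ 𝓝 (0 : X))
    (hX₁add : ∀ x ∈ X₁, ∀ y ∈ X₁, addDefect g x y ∈ M₁)
    {A : ℕ → Set K} (hA : ∀ n, ∀ a ∈ A n, v a ≤ 1)
    (hsmall : ∀ x ∈ X₁, ∃ n, ∀ a ∈ A n, smulDefect g a x ∈ M₁) :
    ∃ n, ∃ U ∈ 𝓝 (0 : X), ∀ u ∈ U, ∀ a ∈ A n, smulDefect g a u ∈ closure M₁ := by
  set F : ℕ → Set X := fun n => {x | ∀ a ∈ A n, smulDefect g a x ∈ closure M₁}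
  have hF : ∀ n, IsClosed (F n) := fun n => by
    simp only [F, ofPred_forall]
    exact isClosed_biInter fun a _ => isClosed_closure.preimage
      ((hg.comp (continuous_const_smul a)).sub (hg.const_smul a))
  obtain ⟨n, x₀, hx₀, hx₀F⟩ := exists_inter_interior_nonempty_of_subset_iUnion
    (isOpen_of_mem_nhds_zero_of_add_mem hX₁nhd hX₁.2.1) ⟨0, hX₁.zero_mem⟩ hF fun x hx => by
      obtain ⟨n, hn⟩ := hsmall x hx
      exact mem_iUnion.2 ⟨n, fun a ha => subset_closure (hn a ha)⟩
  have hshift : (x₀ + ·) ⁻¹' interior (F n) ∈ 𝓝 (0 : X) :=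
    (continuous_const_add x₀).continuousAt.preimage_mem_nhds
      (isOpen_interior.mem_nhds (by simpa using hx₀F))
  refine ⟨n, X₁ ∩ (x₀ + ·) ⁻¹' interior (F n), inter_mem hX₁nhd hshift, ?_⟩
  rintro u ⟨hu, hx₀u⟩ a ha
  have hdecomp : smulDefect g a u = smulDefect g a (x₀ + u) - smulDefect g a x₀ -
      addDefect g (a • x₀) (a • u) + a • addDefect g x₀ u := by
    rw [smulDefect_add_right]
    abel
  have hcl := hM₁.closure
  rw [hdecomp]
  refine hcl.add_mem (hcl.sub_mem hvmul (hcl.sub_mem hvmul ?_ ?_) ?_) ?_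
  · exact interior_subset hx₀u a ha
  · exact interior_subset hx₀F a ha
  · exact subset_closure (hX₁add _ (hX₁.smul_mem (hA n a ha) hx₀) _ (hX₁.smul_mem (hA n a ha) hu))
  · exact hcl.smul_mem (hA n a ha) (subset_closure (hX₁add _ hx₀ _ hu))

lemma smulDefect_smul_mem {K X Y : Type*} [Field K] {v : K → ℝ}
    (hvmul : ∀ a b : K, v (a * b) = v a * v b) [AddCommGroup X] [Module K X]
    [AddCommGroup Y] [Module K Y] {g : X → Y} {M₁ : Set Y} (hM₁ : IsOSubmodule v M₁)
    {c : K} (hc : 0 ≤ v c) {y : X} (hy : ∀ a, v a ≤ v c → smulDefect g a y ∈ M₁)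
    {a : K} (ha : v a ≤ 1) : smulDefect g a (c • y) ∈ M₁ := by
  have hac : v (a * c) ≤ v c := by
    rw [hvmul]
    exact mul_le_of_le_one_left hc ha
  rw [smulDefect_smul]
  exact hM₁.sub_mem hvmul (hy _ hac) (hM₁.smul_mem ha (hy c le_rfl))

theorem statement19_general
    {K X Y : Type*}
    -- `K` is a separable complete non-Archimedean nontrivially valued field:
    [Field K] [TopologicalSpace K] [IsTopologicalRing K] [PolishSpace K]
    (v : K → ℝ)
    (hv0 : ∀ a : K, v a = 0 ↔ a = 0)
    (hvmul : ∀ a b : K, v (a * b) = v a * v b)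
    (hvadd : ∀ a b : K, v (a + b) ≤ max (v a) (v b))
    (hnontriv : ∃ p : K, 0 < v p ∧ v p < 1)
    -- the topology of `K` is the one induced by the valuation metric:
    (hbasis : ∀ s : Set K, s ∈ nhds (0 : K) ↔ ∃ ε : ℝ, 0 < ε ∧ {a : K | v a < ε} ⊆ s)
    -- `X` is a separable Fréchet space over `K`:
    [AddCommGroup X] [Module K X] [TopologicalSpace X] [IsTopologicalAddGroup X]
    [ContinuousSMul K X] [PolishSpace X]
    (hXfrechet : ∃ B : ℕ → Set X, (∀ n, B n ∈ nhds (0 : X)) ∧ (∀ n, IsOSubmodule v (B n)) ∧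
      ∀ U ∈ nhds (0 : X), ∃ n, B n ⊆ U)
    -- `Y` is a Polish topological `K`-vector space:
    [AddCommGroup Y] [Module K Y] [TopologicalSpace Y] [IsTopologicalAddGroup Y]
    [ContinuousSMul K Y]
    [MeasurableSpace Y] [BorelSpace Y]
    -- `M` is a subspace of `Y` carrying a separable Fréchet space topology `τ` whose open sets
    -- are Borel in `Y`:
    (M : Submodule K Y) (τ : TopologicalSpace M)
    (hPol : @PolishSpace M τ) (hTG : @IsTopologicalAddGroup M τ _)
    (hBorelM : ∀ U : Set M, τ.IsOpen U → MeasurableSet (Subtype.val '' U))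
    -- `g` is a continuous odd lift of a `K`-linear map `X → Y/M`:
    (g : X → Y) (hg : Continuous g)
    (hglin : ∀ (x y : X) (a b : K), g (a • x + b • y) - a • g x - b • g y ∈ M)
    -- `M₁` is an absolutely convex neighborhood of `0` in `M` with `M₁ = cl_Y(M₁) ∩ M`:
    (M₁ : Set Y) (hM₁O : IsOSubmodule v M₁)
    (hM₁nhd : {m : M | (m : Y) ∈ M₁} ∈ @nhds M τ 0)
    (hM₁cl : M₁ = closure M₁ ∩ (M : Set Y))
    -- `X₁` is an absolutely convex neighborhood of `0` in `X` on which `g` is additive mod `M₁`: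
    (X₁ : Set X) (hX₁O : IsOSubmodule v X₁) (hX₁nhd : X₁ ∈ nhds (0 : X))
    (hX₁add : ∀ x ∈ X₁, ∀ y ∈ X₁, g (x + y) - g x - g y ∈ M₁) :
    ∃ X₁' : Set X, IsOSubmodule v X₁' ∧ X₁' ∈ nhds (0 : X) ∧
      ∀ x ∈ X₁', ∀ a : K, v a ≤ 1 → g (a • x) - a • g x ∈ M₁ := by
  obtain ⟨π, hπ0, hπ1⟩ := hnontriv
  have hA : ∀ n, ∀ a ∈ {a | v a ≤ v (π ^ n)}, v a ≤ 1 := fun n a ha =>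
    ha.trans ((valuation_pow hv0 hvmul π n).trans_le (pow_le_one₀ hπ0.le hπ1.le))
  have hM : ∀ a x, smulDefect g a x ∈ M := fun a x => by
    simpa [smulDefect] using hglin x 0 a 0
  obtain ⟨C, hC, hMC, hCM₁⟩ :=
    exists_measurableSet_cover_of_mem_nhds_zero (tZ := τ) M.subtype.toAddMonoidHom hBorelM hM₁nhd
  have hsmall : ∀ x ∈ X₁, ∃ n, ∀ a ∈ {a | v a ≤ v (π ^ n)}, smulDefect g a x ∈ M₁ :=
    fun x hx => exists_setOf_valuation_le_pow_subset hbasis hv0 hvmul hπ1 <|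
      eventually_smulDefect_mem hvmul (isOpen_setOf_valuation_le_one hbasis hvadd)
        (((hv0 0).2 rfl).trans_le zero_le_one) hg hM₁O
        hC hCM₁ (fun a _ => hMC ⟨⟨_, hM a x⟩, rfl⟩)
        fun a b ha hb => hX₁add _ (hX₁O.smul_mem ha hx) _ (hX₁O.smul_mem hb hx)
  obtain ⟨n, U, hU, hUcl⟩ :=
    exists_mem_nhds_zero_smulDefect_mem_closure hvmul hg hM₁O hX₁O hX₁nhd hX₁add hA hsmall
  obtain ⟨B, hBnhd, hBO, hBsub⟩ := hXfrechet
  obtain ⟨m, hm⟩ := hBsub U hU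
  have hπn : π ^ n ≠ 0 := pow_ne_zero n fun h => by simp [h, (hv0 0).2 rfl] at hπ0
  refine ⟨π ^ n • B m, (hBO m).smul_set _, (set_smul_mem_nhds_zero_iff hπn).2 (hBnhd m), ?_⟩
  rintro _ ⟨y, hy, rfl⟩ a ha
  refine smulDefect_smul_mem hvmul hM₁O (by rw [valuation_pow hv0 hvmul]; positivity)
    (fun b hb => ?_) ha
  rw [hM₁cl]
  exact ⟨hUcl y (hm hy) b hb, hM b y⟩

/-- Lemma on lifts of linear maps between Fréchet spaces over a separable complete
non-Archimedean valued field `K` with `2 ≠ 0`: a continuous odd lift `g` which is additive modulo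
`M₁` on an absolutely convex neighborhood of `0` is, on a possibly smaller absolutely convex
neighborhood of `0`, also `𝒪`-homogeneous modulo `M₁`. -/
theorem statement19
    {K X Y : Type*}
    -- `K` is a separable complete non-Archimedean nontrivially valued field:
    [Field K] [TopologicalSpace K] [IsTopologicalRing K] [PolishSpace K]
    (v : K → ℝ)
    (hv0 : ∀ a : K, v a = 0 ↔ a = 0)
    (hvmul : ∀ a b : K, v (a * b) = v a * v b)
    (hvadd : ∀ a b : K, v (a + b) ≤ max (v a) (v b))
    (hnontriv : ∃ p : K, 0 < v p ∧ v p < 1)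
    -- the topology of `K` is the one induced by the valuation metric:
    (hbasis : ∀ s : Set K, s ∈ nhds (0 : K) ↔ ∃ ε : ℝ, 0 < ε ∧ {a : K | v a < ε} ⊆ s)
    (h2 : (2 : K) ≠ 0) (hv2 : 0 < v 2)
    -- `X` is a separable Fréchet space over `K`:
    [AddCommGroup X] [Module K X] [TopologicalSpace X] [IsTopologicalAddGroup X]
    [ContinuousSMul K X] [PolishSpace X]
    (hXfrechet : ∃ B : ℕ → Set X, (∀ n, B n ∈ nhds (0 : X)) ∧ (∀ n, IsOSubmodule v (B n)) ∧
      ∀ U ∈ nhds (0 : X), ∃ n, B n ⊆ U)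
    -- `Y` is a Polish topological `K`-vector space:
    [AddCommGroup Y] [Module K Y] [TopologicalSpace Y] [IsTopologicalAddGroup Y]
    [ContinuousSMul K Y] [PolishSpace Y]
    [MeasurableSpace Y] [BorelSpace Y]
    -- `M` is a subspace of `Y` carrying a separable Fréchet space topology `τ` whose open sets
    -- are Borel in `Y`:
    (M : Submodule K Y) (τ : TopologicalSpace M)
    (hPol : @PolishSpace M τ) (hTG : @IsTopologicalAddGroup M τ _)
    (hSMulM : @ContinuousSMul K M _ _ τ)
    (hBorelM : ∀ U : Set M, τ.IsOpen U → MeasurableSet (Subtype.val '' U))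
    (hMfrechet : ∃ B : ℕ → Set M, (∀ n, B n ∈ @nhds M τ 0) ∧ (∀ n, IsOSubmodule v (B n)) ∧
      ∀ U ∈ @nhds M τ 0, ∃ n, B n ⊆ U)
    -- `g` is a continuous odd lift of a `K`-linear map `X → Y/M`:
    (g : X → Y) (hg : Continuous g)
    (hgneg : ∀ z : X, g (-z) = -g z)
    (hglin : ∀ (x y : X) (a b : K), g (a • x + b • y) - a • g x - b • g y ∈ M)
    -- `M₁` is an absolutely convex neighborhood of `0` in `M` with `M₁ = cl_Y(M₁) ∩ M`:
    (M₁ : Set Y) (hM₁M : M₁ ⊆ (M : Set Y)) (hM₁O : IsOSubmodule v M₁)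
    (hM₁nhd : {m : M | (m : Y) ∈ M₁} ∈ @nhds M τ 0)
    (hM₁cl : M₁ = closure M₁ ∩ (M : Set Y))
    -- `X₁` is an absolutely convex neighborhood of `0` in `X` on which `g` is additive mod `M₁`:
    (X₁ : Set X) (hX₁O : IsOSubmodule v X₁) (hX₁nhd : X₁ ∈ nhds (0 : X))
    (hX₁add : ∀ x ∈ X₁, ∀ y ∈ X₁, g (x + y) - g x - g y ∈ M₁) :
    ∃ X₁' : Set X, IsOSubmodule v X₁' ∧ X₁' ∈ nhds (0 : X) ∧
      ∀ x ∈ X₁', ∀ a : K, v a ≤ 1 → g (a • x) - a • g x ∈ M₁ :=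
  statement19_general v hv0 hvmul hvadd hnontriv hbasis hXfrechet M τ hPol hTG hBorelM g hg hglin M₁
    hM₁O hM₁nhd hM₁cl X₁ hX₁O hX₁nhd hX₁add
end
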